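/- arXiv:1005.5223 — 2 statements merged into one kernel-verified Lean document; each statement's English description precedes it below -/
import Mathlib

section
/- Under a fair scheduler, starting from any configuration, after at most D rounds of the induction the min+1 protocol reaches a configuration where every vertex v with dist(v, B∪{r}) ≥ d has level at least min(d, dist(v, B∪{r})); formally, for each d ≤ D, the predicate I_d is achieved in finite time and is closed thereafter. -/
namespace BFS

variable {V : Type*}

noncomputable def distS (G : SimpleGraph V) (v : V) (S : Set V) : ℕ := sInf (G.dist v '' S)

def IPred (G : SimpleGraph V) (r : V) (B : Set V) (d : ℕ) (ℓ : V → ℕ) : Prop :=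
  ∀ v, min d (distS G v (B ∪ {r})) ≤ ℓ v

def SB (G : SimpleGraph V) (r : V) (B : Set V) : Set V :=
  {v | ∃ b ∈ B, G.dist v b ≤ G.dist v r}

def SBstar (G : SimpleGraph V) (r : V) (B : Set V) : Set V :=
  {v | ∃ b ∈ B, G.dist v b < G.dist v r}

def IsBFSPath (G : SimpleGraph V) (r : V) (B : Set V) (ℓ : V → ℕ)
    (prnt : V → Option V) (k : ℕ) (w : ℕ → V) : Prop :=
  1 ≤ k ∧ prnt (w 0) = none ∧ ℓ (w 0) = 0 ∧ w 0 ∈ B ∪ {r} ∧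
  ∀ i, 1 ≤ i → i ≤ k →
    prnt (w i) = some (w (i - 1)) ∧ G.Adj (w (i - 1)) (w i) ∧
    ℓ (w i) = ℓ (w (i - 1)) + 1 ∧
    ℓ (w (i - 1)) = sInf (ℓ '' {u | G.Adj (w i) u})

def Spec (G : SimpleGraph V) (r : V) (B : Set V) (ℓ : V → ℕ)
    (prnt : V → Option V) (v : V) : Prop :=
  (v = r → prnt v = none ∧ ℓ v = 0) ∧
  (v ≠ r → ∃ k w, IsBFSPath G r B ℓ prnt k w ∧ w k = v)

/-- A configuration: each vertex has a level and a parent pointer. -/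
structure Config (V : Type*) where
  lvl : V → ℕ
  prnt : V → Option V

/-- The guard of the `min+1` protocol. The root is enabled when its output is not
`(⊥, 0)`; another process is enabled unless its parent is a neighbour with minimal
level among the neighbours and its own level is the parent's level plus one. -/
def Enabled (G : SimpleGraph V) (r : V) (ρ : Config V) (v : V) : Prop :=
  (v = r → (ρ.prnt v ≠ none ∨ ρ.lvl v ≠ 0)) ∧
  (v ≠ r → ¬ ∃ u, ρ.prnt v = some u ∧ G.Adj v u ∧ ρ.lvl v = ρ.lvl u + 1 ∧
      ∀ q, G.Adj v q → ρ.lvl u ≤ ρ.lvl q)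

/-- The set of neighbours of `v` with minimal level. -/
def minNbrs (G : SimpleGraph V) (ρ : Config V) (v : V) : Set V :=
  {q | G.Adj v q ∧ ∀ q', G.Adj v q' → ρ.lvl q ≤ ρ.lvl q'}

/-- One step of the `min+1` protocol where the set `A` of processes is activated:
non-activated correct processes keep their state, the root resets its output, an
enabled activated correct process adopts some minimal-level neighbour as parent,
Byzantine processes behave arbitrarily. -/
def StepM (G : SimpleGraph V) (r : V) (B : Set V) (ρ ρ' : Config V) (A : Set V) : Prop :=
  ∀ v, v ∉ B →
    (v ∉ A → ρ'.lvl v = ρ.lvl v ∧ ρ'.prnt v = ρ.prnt v) ∧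
    (v ∈ A →
      (v = r → ρ'.lvl v = 0 ∧ ρ'.prnt v = none) ∧
      (v ≠ r → (Enabled G r ρ v →
          ∃ p ∈ minNbrs G ρ v, ρ'.prnt v = some p ∧ ρ'.lvl v = ρ.lvl p + 1) ∧
        (¬ Enabled G r ρ v → ρ'.lvl v = ρ.lvl v ∧ ρ'.prnt v = ρ.prnt v)))

/-- An execution of the `min+1` protocol along the schedule `A`. -/
def IsExecM (G : SimpleGraph V) (r : V) (B : Set V)
    (e : ℕ → Config V) (A : ℕ → Set V) : Prop :=
  ∀ n, StepM G r B (e n) (e (n + 1)) (A n)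

/-- Fairness: a correct process that is infinitely often enabled is infinitely
often activated. -/
def Fair (G : SimpleGraph V) (r : V) (B : Set V)
    (e : ℕ → Config V) (A : ℕ → Set V) : Prop :=
  ∀ v, v ∉ B → (∀ n, ∃ m, n ≤ m ∧ Enabled G r (e m) v) → ∀ n, ∃ m, n ≤ m ∧ v ∈ A m

/-- Round-robin choice: `p` is the next element of `A` (w.r.t. the numbering `num`)
strictly after index `c`, cyclically. -/
def IsChoice (num : V → ℕ) (c : ℕ) (A : Set V) (p : V) : Prop :=
  p ∈ A ∧
  ((∃ a ∈ A, c < num a) → (c < num p ∧ ∀ a ∈ A, c < num a → num p ≤ num a)) ∧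
  ((∀ a ∈ A, num a ≤ c) → ∀ a ∈ A, num p ≤ num a)

/-- Index of the current parent of `v` (0 if it has no parent). -/
def currIdx (num : V → ℕ) (ρ : Config V) (v : V) : ℕ := (ρ.prnt v).elim 0 num

/-- One step of the `SSBFS` protocol (round-robin variant of `min+1`). -/
def StepRR (G : SimpleGraph V) (r : V) (B : Set V) (num : V → ℕ)
    (ρ ρ' : Config V) (A : Set V) : Prop :=
  ∀ v, v ∉ B →
    (v ∉ A → ρ'.lvl v = ρ.lvl v ∧ ρ'.prnt v = ρ.prnt v) ∧
    (v ∈ A →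
      (v = r → ρ'.lvl v = 0 ∧ ρ'.prnt v = none) ∧
      (v ≠ r → (Enabled G r ρ v →
          ∃ p, IsChoice num (currIdx num ρ v) (minNbrs G ρ v) p ∧
            ρ'.prnt v = some p ∧ ρ'.lvl v = ρ.lvl p + 1) ∧
        (¬ Enabled G r ρ v → ρ'.lvl v = ρ.lvl v ∧ ρ'.prnt v = ρ.prnt v)))

/-- An execution of the `SSBFS` protocol along the schedule `A`. -/
def IsExecRR (G : SimpleGraph V) (r : V) (B : Set V) (num : V → ℕ)
    (e : ℕ → Config V) (A : ℕ → Set V) : Prop :=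
  ∀ n, StepRR G r B num (e n) (e (n + 1)) (A n)

end BFS

/-! Write `δ v` for the distance from `v` to `B ∪ {r}`. Suppose `I_d` holds from some time on.
A correct vertex `v` that moves takes the level `ℓ p + 1` of a neighbour `p`, and
`ℓ p + 1 ≥ min d (δ p) + 1 ≥ min (d + 1) (δ v)`, so once `v` satisfies the bound of `I_(d+1)`
it keeps it. A vertex violating that bound is enabled, since by the same inequality no neighbour
is a valid parent; by fairness it is eventually activated, and from then on the bound holds.
Finitely many vertices give a common time from which `I_(d+1)` holds. -/

namespace BFS

open Filter

variable {V : Type*} {G : SimpleGraph V}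

lemma distS_le_dist {S : Set V} {v b : V} (hb : b ∈ S) : distS G v S ≤ G.dist v b :=
  Nat.sInf_le ⟨b, hb, rfl⟩

lemma distS_eq_zero_of_mem {S : Set V} {v : V} (hv : v ∈ S) : distS G v S = 0 :=
  Nat.eq_zero_of_le_zero (by simpa using distS_le_dist (G := G) (v := v) hv)

lemma distS_le_distS_add_one_of_adj {v q : V} (h : G.Adj v q) (S : Set V) :
    distS G v S ≤ distS G q S + 1 := by
  rcases S.eq_empty_or_nonempty with rfl | hS
  · simp [distS]
  obtain ⟨b, hb, hqb⟩ := Nat.sInf_mem (hS.image (G.dist q))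
  calc distS G v S ≤ G.dist v b := distS_le_dist hb
    _ ≤ G.dist v q + G.dist q b := h.reachable.dist_triangle_left b
    _ = distS G q S + 1 := by rw [SimpleGraph.dist_eq_one_iff_adj.2 h, hqb, distS, add_comm]

variable {r : V} {B : Set V}

lemma IPred.mono {d d' : ℕ} {ℓ : V → ℕ} (h : IPred G r B d ℓ) (hd : d' ≤ d) :
    IPred G r B d' ℓ :=
  fun v => (min_le_min_right _ hd).trans (h v)

lemma IPred.min_succ_le_succ_of_adj {d : ℕ} {ℓ : V → ℕ} (h : IPred G r B d ℓ) {v u : V}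
    (hvu : G.Adj v u) : min (d + 1) (distS G v (B ∪ {r})) ≤ ℓ u + 1 := by
  have := h u
  have := distS_le_distS_add_one_of_adj hvu (B ∪ {r})
  omega

lemma enabled_of_lvl_lt {d : ℕ} {ρ : Config V} (hI : IPred G r B d ρ.lvl) {v : V}
    (hv : ρ.lvl v < min (d + 1) (distS G v (B ∪ {r}))) : Enabled G r ρ v := by
  refine ⟨fun hvr => ?_, fun _ ⟨u, _, hvu, hlvl, _⟩ => ?_⟩
  · rw [hvr, distS_eq_zero_of_mem (Set.mem_union_right B (Set.mem_singleton r))] at hv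
    omega
  · have := hI.min_succ_le_succ_of_adj hvu
    omega

lemma StepM.min_succ_le_lvl {d : ℕ} {ρ ρ' : Config V} {A : Set V}
    (hstep : StepM G r B ρ ρ' A) (hI : IPred G r B d ρ.lvl) {v : V}
    (hv : min (d + 1) (distS G v (B ∪ {r})) ≤ ρ.lvl v ∨ v ∈ A ∧ Enabled G r ρ v) :
    min (d + 1) (distS G v (B ∪ {r})) ≤ ρ'.lvl v := by
  by_cases hv₀ : v ∈ B ∪ {r}
  · rw [distS_eq_zero_of_mem hv₀]
    omega
  obtain ⟨hpassive, hactive⟩ := hstep v fun h => hv₀ (Or.inl h)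
  by_cases hA : v ∈ A
  · have hactive := (hactive hA).2 fun h => hv₀ (Or.inr h)
    by_cases hen : Enabled G r ρ v
    · obtain ⟨p, ⟨hvp, -⟩, -, hlvl⟩ := hactive.1 hen
      exact hlvl ▸ hI.min_succ_le_succ_of_adj hvp
    · rw [(hactive.2 hen).1]
      tauto
  · rw [(hpassive hA).1]
    tauto

lemma StepM.iPred {d : ℕ} {ρ ρ' : Config V} {A : Set V} (hstep : StepM G r B ρ ρ' A)
    (hI : IPred G r B d ρ.lvl) : IPred G r B d ρ'.lvl := by
  cases d with
  | zero => intro v; simp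
  | succ d => exact fun v => hstep.min_succ_le_lvl (hI.mono d.le_succ) (Or.inl (hI v))

variable {e : ℕ → Config V} {A : ℕ → Set V} {d n₀ : ℕ}

lemma IsExecM.min_succ_le_lvl_of_le (hexec : IsExecM G r B e A)
    (hI : ∀ m ≥ n₀, IPred G r B d (e m).lvl) {v : V} {m : ℕ} (hm : n₀ ≤ m)
    (hv : min (d + 1) (distS G v (B ∪ {r})) ≤ (e m).lvl v) :
    ∀ m' ≥ m, min (d + 1) (distS G v (B ∪ {r})) ≤ (e m').lvl v := by
  intro m' hm'
  induction m', hm' using Nat.le_induction with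
  | base => exact hv
  | succ k hk ih => exact (hexec k).min_succ_le_lvl (hI k (hm.trans hk)) (Or.inl ih)

lemma IsExecM.exists_min_succ_le_lvl (hexec : IsExecM G r B e A) (hfair : Fair G r B e A)
    (hI : ∀ m ≥ n₀, IPred G r B d (e m).lvl) (v : V) :
    ∃ m ≥ n₀, min (d + 1) (distS G v (B ∪ {r})) ≤ (e m).lvl v := by
  by_contra! hlow
  have henabled : ∀ m ≥ n₀, Enabled G r (e m) v := fun m hm =>
    enabled_of_lvl_lt (hI m hm) (hlow m hm)
  have hvB : v ∉ B := fun hv => by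
    have := hlow n₀ le_rfl
    rw [distS_eq_zero_of_mem (Set.mem_union_left {r} hv)] at this
    omega
  obtain ⟨m, hm, hA⟩ := hfair v hvB
    (fun n => ⟨max n n₀, le_max_left _ _, henabled _ (le_max_right _ _)⟩) n₀
  exact (hlow (m + 1) (by omega)).not_ge
    ((hexec m).min_succ_le_lvl (hI m hm) (Or.inr ⟨hA, henabled m hm⟩))

lemma IsExecM.eventually_iPred [Finite V] (hexec : IsExecM G r B e A)
    (hfair : Fair G r B e A) (d : ℕ) : ∀ᶠ n in atTop, IPred G r B d (e n).lvl := by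
  induction d with
  | zero => exact Eventually.of_forall fun n v => by simp
  | succ d ih =>
    obtain ⟨n₀, hI⟩ := eventually_atTop.1 ih
    refine eventually_all.2 fun v => ?_
    obtain ⟨m, hm, hv⟩ := hexec.exists_min_succ_le_lvl hfair hI v
    exact eventually_atTop.2 ⟨m, hexec.min_succ_le_lvl_of_le hI hm hv⟩

end BFS

open BFS in
theorem stmt7_general {V : Type*} [Fintype V] (G : SimpleGraph V)
    (r : V) (B : Set V) (D : ℕ)
    (e : ℕ → BFS.Config V) (A : ℕ → Set V)
    (hexec : BFS.IsExecM G r B e A) (hfair : BFS.Fair G r B e A) :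
    ∀ d ≤ D,
      (∃ n, BFS.IPred G r B d (e n).lvl) ∧
      (∀ n, BFS.IPred G r B d (e n).lvl → BFS.IPred G r B d (e (n + 1)).lvl) :=
  fun d _ => ⟨(hexec.eventually_iPred hfair d).exists, fun n => (hexec n).iPred⟩

open BFS in
/-- Convergence and closure of `I_d` for the `min+1` protocol: in any fair execution
starting from any configuration, for every `d ≤ D` (`D` the diameter), a configuration
satisfying `I_d` is reached in finite time, and `I_d` is closed thereafter. -/
theorem stmt7 {V : Type*} [Fintype V] (G : SimpleGraph V) (hG : G.Connected)
    (r : V) (B : Set V) (hrB : r ∉ B) (D : ℕ) (hD : ∀ u w, G.dist u w ≤ D)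
    (e : ℕ → BFS.Config V) (A : ℕ → Set V)
    (hexec : BFS.IsExecM G r B e A) (hfair : BFS.Fair G r B e A) :
    ∀ d ≤ D,
      (∃ n, BFS.IPred G r B d (e n).lvl) ∧
      (∀ n, BFS.IPred G r B d (e n).lvl → BFS.IPred G r B d (e (n + 1)).lvl) :=
  stmt7_general G r B D e A hexec hfair
end

section
/- If every vertex v of a finite connected graph with root r satisfies the BFS specification (with B = ∅, so the only BFS-path origin is r), then the parent pointers form a spanning tree rooted at r and ℓ(v) = d(v, r) for every v. -/
/-!
Along a BFS path levels rise by exactly one per edge, so the path to `v` is a walk of length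
`ℓ v` to `r` and `d(v, r) ≤ ℓ v`. Conversely the parent of `v ≠ r` has level `ℓ v - 1` and minimal
level among the neighbours of `v`, so `ℓ` grows by at most one per edge and `ℓ v` is bounded by
the length of a shortest walk. Parent chains reach `r` because levels strictly decrease along them.
-/

namespace BFS

section

variable {V : Type*} {G : SimpleGraph V} {r : V} {B : Set V} {ℓ : V → ℕ}
  {prnt : V → Option V} {k : ℕ} {w : ℕ → V}

theorem IsBFSPath.level_eq_index (h : IsBFSPath G r B ℓ prnt k w) {i : ℕ} (hi : i ≤ k) :
    ℓ (w i) = i := by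
  induction i with
  | zero => exact h.2.2.1
  | succ i ih =>
    rw [(h.2.2.2.2 (i + 1) (by omega) hi).2.2.1, Nat.add_sub_cancel, ih (by omega)]

theorem IsBFSPath.exists_walk_to_start (h : IsBFSPath G r B ℓ prnt k w) {i : ℕ} (hi : i ≤ k) :
    ∃ p : G.Walk (w i) (w 0), p.length = i := by
  induction i with
  | zero => exact ⟨.nil, rfl⟩
  | succ i ih =>
    obtain ⟨p, hp⟩ := ih (by omega)
    have hadj := (h.2.2.2.2 (i + 1) (by omega) hi).2.1
    rw [Nat.add_sub_cancel] at hadj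
    exact ⟨.cons hadj.symm p, by simp [hp]⟩

theorem IsBFSPath.exists_parent_last (h : IsBFSPath G r B ℓ prnt k w) :
    ∃ u, prnt (w k) = some u ∧ G.Adj (w k) u ∧ ℓ (w k) = ℓ u + 1 ∧
      ∀ x, G.Adj (w k) x → ℓ u ≤ ℓ x := by
  obtain ⟨hprnt, hadj, hlevel, hmin⟩ := h.2.2.2.2 k h.1 le_rfl
  exact ⟨w (k - 1), hprnt, hadj.symm, hlevel, fun x hx => hmin ▸ Nat.sInf_le ⟨x, hx, rfl⟩⟩

theorem Spec.exists_parent {v : V} (h : Spec G r B ℓ prnt v) (hv : v ≠ r) :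
    ∃ u, prnt v = some u ∧ G.Adj v u ∧ ℓ v = ℓ u + 1 ∧ ∀ x, G.Adj v x → ℓ u ≤ ℓ x := by
  obtain ⟨k, w, hw, rfl⟩ := h.2 hv
  exact hw.exists_parent_last

theorem Spec.exists_walk_length_eq_level {v : V} (h : Spec G r ∅ ℓ prnt v) :
    ∃ p : G.Walk v r, p.length = ℓ v := by
  by_cases hv : v = r
  · subst hv
    exact ⟨.nil, (h.1 rfl).2.symm⟩
  obtain ⟨k, w, hw, rfl⟩ := h.2 hv
  have hw0 : w 0 = r := by simpa using hw.2.2.2.1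
  rw [← hw0, hw.level_eq_index le_rfl]
  exact hw.exists_walk_to_start le_rfl

end

end BFS

namespace SimpleGraph

variable {V : Type*} {G : SimpleGraph V} {r : V}

theorem le_walk_length_of_le_succ {ℓ : V → ℕ} (hr : ℓ r = 0)
    (hstep : ∀ v ≠ r, ∀ x, G.Adj v x → ℓ v ≤ ℓ x + 1) {v : V} (p : G.Walk v r) :
    ℓ v ≤ p.length := by
  induction p with
  | nil => simp [hr]
  | @cons v x t hadj q ih =>
    by_cases hv : v = t
    · simp [hv, hr]
    · have := hstep v hv x hadj
      have := ih hr hstep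
      simp only [Walk.length_cons]
      omega

theorem exists_parent_chain {ℓ : V → ℕ} {prnt : V → Option V}
    (hparent : ∀ v ≠ r, ∃ u, prnt v = some u ∧ G.Adj v u ∧ ℓ u < ℓ v) (v : V) :
    ∃ (k : ℕ) (w : ℕ → V), w 0 = v ∧ w k = r ∧
      ∀ i < k, prnt (w i) = some (w (i + 1)) ∧ G.Adj (w i) (w (i + 1)) := by
  induction hn : ℓ v using Nat.strong_induction_on generalizing v with
  | _ n ih =>
    by_cases hv : v = r
    · exact ⟨0, fun _ => r, hv.symm, rfl, fun i hi => absurd hi (Nat.not_lt_zero i)⟩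
    obtain ⟨u, hprnt, hadj, hlt⟩ := hparent v hv
    obtain ⟨k, w, rfl, hwk, hchain⟩ := ih (ℓ u) (hn ▸ hlt) u rfl
    refine ⟨k + 1, fun | 0 => v | i + 1 => w i, rfl, hwk, ?_⟩
    rintro (_ | i) hi
    · exact ⟨hprnt, hadj⟩
    · exact hchain i (by omega)

end SimpleGraph

open BFS in
theorem stmt16_general {V : Type*} (G : SimpleGraph V)
    (r : V) (ℓ : V → ℕ) (prnt : V → Option V)
    (hspec : ∀ v, BFS.Spec G r ∅ ℓ prnt v) :
    (∀ v, ℓ v = G.dist v r) ∧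
    (∀ v, v ≠ r → ∃ u, prnt v = some u ∧ G.Adj v u) ∧
    (∀ v, ∃ (k : ℕ) (w : ℕ → V), w 0 = v ∧ w k = r ∧
      ∀ i < k, prnt (w i) = some (w (i + 1)) ∧ G.Adj (w i) (w (i + 1))) := by
  have hparent (v : V) (hv : v ≠ r) := (hspec v).exists_parent hv
  have hstep : ∀ v ≠ r, ∀ x, G.Adj v x → ℓ v ≤ ℓ x + 1 := by
    intro v hv x hx
    obtain ⟨u, -, -, hvu, hmin⟩ := hparent v hv
    have := hmin x hx
    omega
  have hlevel (v : V) : ℓ v = G.dist v r := by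
    obtain ⟨p, hp⟩ := (hspec v).exists_walk_length_eq_level
    obtain ⟨q, hq⟩ := p.reachable.exists_walk_length_eq_dist
    exact le_antisymm (hq ▸ G.le_walk_length_of_le_succ ((hspec r).1 rfl).2 hstep q)
      (hp ▸ G.dist_le p)
  refine ⟨hlevel, fun v hv => ?_, G.exists_parent_chain (ℓ := ℓ) fun v hv => ?_⟩
  · obtain ⟨u, hprnt, hadj, -⟩ := hparent v hv
    exact ⟨u, hprnt, hadj⟩
  · obtain ⟨u, hprnt, hadj, hvu, -⟩ := hparent v hv
    exact ⟨u, hprnt, hadj, by omega⟩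

open BFS in
/-- If every vertex of a finite connected graph with root `r` satisfies the BFS
specification with `B = ∅`, then `ℓ(v) = d(v,r)` for every `v`, and the parent
pointers form a spanning tree rooted at `r`: every vertex's parent chain follows
edges of the graph and reaches `r`. -/
theorem stmt16 {V : Type*} [Fintype V] (G : SimpleGraph V) (hG : G.Connected)
    (r : V) (ℓ : V → ℕ) (prnt : V → Option V)
    (hspec : ∀ v, BFS.Spec G r ∅ ℓ prnt v) :
    (∀ v, ℓ v = G.dist v r) ∧
    (∀ v, v ≠ r → ∃ u, prnt v = some u ∧ G.Adj v u) ∧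
    (∀ v, ∃ (k : ℕ) (w : ℕ → V), w 0 = v ∧ w k = r ∧
      ∀ i < k, prnt (w i) = some (w (i + 1)) ∧ G.Adj (w i) (w (i + 1))) :=
  stmt16_general G r ℓ prnt hspec
end
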